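/- For every positive integer k, the integral polytope P in ℝ² given by the convex hull of the four points (k,0), (k,1), (-k,0), (-k,-1) is symmetric, but there is no integral polytope Q in ℝ² such that P = Q + (-Q). -/
import Mathlib


open Pointwise

/-- An integral polytope in `ℝ²`: the convex hull of a nonempty finite set of
points all of whose coordinates are integers. -/
def IsIntegralPolytope (P : Set (Fin 2 → ℝ)) : Prop :=
  ∃ S : Finset (Fin 2 → ℝ), S.Nonempty ∧ (∀ x ∈ S, ∀ i, ∃ m : ℤ, x i = (m : ℝ)) ∧
    P = convexHull ℝ (S : Set (Fin 2 → ℝ))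

/-- For every positive integer `k`, the convex hull of `(k,0), (k,1), (-k,0), (-k,-1)`
is symmetric but is not an integral norm. -/
theorem parallelogram_symmetric_not_norm (k : ℕ) (hk : 0 < k) :
    let P : Set (Fin 2 → ℝ) :=
      convexHull ℝ {![(k : ℝ), 0], ![(k : ℝ), 1], ![-(k : ℝ), 0], ![-(k : ℝ), -1]}
    P = -P ∧ ¬ ∃ Q : Set (Fin 2 → ℝ), IsIntegralPolytope Q ∧ P = Q + (-Q) := by
  intro P
  have hK : (0 : ℝ) < k := by exact_mod_cast hk
  have e1 : -![(k : ℝ), 0] = ![-(k : ℝ), 0] := by funext i; fin_cases i <;> simp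
  have e2 : -![(k : ℝ), 1] = ![-(k : ℝ), -1] := by funext i; fin_cases i <;> simp
  have e3 : -![-(k : ℝ), 0] = ![(k : ℝ), 0] := by funext i; fin_cases i <;> simp
  have e4 : -![-(k : ℝ), -1] = ![(k : ℝ), 1] := by funext i; fin_cases i <;> simp
  -- membership of generators
  have hv1 : ![(k : ℝ), 0] ∈ P := subset_convexHull ℝ _ (by simp)
  have hv2 : ![(k : ℝ), 1] ∈ P := subset_convexHull ℝ _ (by simp)
  -- halfspace lemma
  have hhalf : ∀ a b c : ℝ, a * k ≤ c → a * k + b ≤ c → -(a * k) ≤ c → -(a * k) - b ≤ c →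
      ∀ x ∈ P, a * x 0 + b * x 1 ≤ c := by
    intro a b c h1 h2 h3 h4 x hx
    have hlin : IsLinearMap ℝ (fun v : Fin 2 → ℝ => a * v 0 + b * v 1) := by
      constructor
      · intro u v; simp [Pi.add_apply]; ring
      · intro r v; simp [Pi.smul_apply, smul_eq_mul]; ring
    refine convexHull_min ?_ (convex_halfSpace_le hlin c) hx
    intro y hy
    simp only [Set.mem_insert_iff, Set.mem_singleton_iff] at hy
    rcases hy with rfl | rfl | rfl | rfl <;>
      simp only [Set.mem_setOf_eq, Matrix.cons_val_zero, Matrix.cons_val_one, Matrix.head_cons] <;>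
      linarith
  constructor
  · -- symmetry
    show P = -P
    have hS : ({![(k : ℝ), 0], ![(k : ℝ), 1], ![-(k : ℝ), 0], ![-(k : ℝ), -1]} :
        Set (Fin 2 → ℝ)) =
        -{![(k : ℝ), 0], ![(k : ℝ), 1], ![-(k : ℝ), 0], ![-(k : ℝ), -1]} := by
      ext x
      simp only [Set.mem_neg, Set.mem_insert_iff, Set.mem_singleton_iff]
      constructor
      · rintro (rfl | rfl | rfl | rfl)
        · right; right; left; rw [e1]
        · right; right; right; rw [e2]
        · left; rw [e3]
        · right; left; rw [e4]
      · rintro (h | h | h | h) <;> rw [← neg_eq_iff_eq_neg.mpr h.symm]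
        · right; right; left; rw [e1]
        · right; right; right; rw [e2]
        · left; rw [e3]
        · right; left; rw [e4]
    show convexHull ℝ _ = -P
    conv_lhs => rw [hS]
    rw [convexHull_neg]
  · rintro ⟨Q, ⟨T, hTne, hTint, rfl⟩, hPQ⟩
    set QQ := convexHull ℝ (T : Set (Fin 2 → ℝ)) with hQQ
    have hdiff : ∀ p ∈ T, ∀ q ∈ T, p - q ∈ P := by
      intro p hp q hq
      rw [hPQ, sub_eq_add_neg]
      exact Set.add_mem_add (subset_convexHull ℝ _ hp)
        (Set.neg_mem_neg.mpr (subset_convexHull ℝ _ hq))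
    -- width constraints
    have hy1 : ∀ p ∈ T, ∀ q ∈ T, p 1 - q 1 ≤ 1 := by
      intro p hp q hq
      have := hhalf 0 1 1 (by linarith) (by linarith) (by linarith) (by linarith)
        (p - q) (hdiff p hp q hq)
      simpa using this
    have hkey : ∀ p ∈ T, ∀ q ∈ T, p 1 = q 1 + 1 → p 0 = q 0 + k := by
      intro p hp q hq h1
      have hd := hdiff p hp q hq
      have h5 := hhalf 1 0 k (by linarith) (by linarith) (by linarith) (by linarith) (p - q) hd
      have h6 := hhalf (-1) (2 * k) k (by linarith) (by linarith) (by linarith) (by linarith)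
        (p - q) hd
      simp only [Pi.sub_apply] at h5 h6
      have h7 : 2 * (k : ℝ) * (p 1 - q 1) = 2 * k := by rw [h1]; ring
      linarith
    -- hyperplane lemma
    have hplane : ∀ a b : ℝ,
        (∀ u ∈ T, ∀ w ∈ T, a * u 0 + b * u 1 = a * w 0 + b * w 1) →
        ∀ x ∈ P, a * x 0 + b * x 1 = 0 := by
      intro a b hconst x hx
      obtain ⟨u0, hu0⟩ := hTne
      have hlin : IsLinearMap ℝ (fun v : Fin 2 → ℝ => a * v 0 + b * v 1) := by
        constructor
        · intro u v; simp [Pi.add_apply]; ring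
        · intro r v; simp [Pi.smul_apply, smul_eq_mul]; ring
      have hQsub : QQ ⊆ {w : Fin 2 → ℝ | a * w 0 + b * w 1 = a * u0 0 + b * u0 1} := by
        refine convexHull_min ?_ (convex_hyperplane hlin _)
        intro w hw
        exact hconst w hw u0 hu0
      rw [hPQ] at hx
      rcases hx with ⟨q, hq, r, hr, rfl⟩
      have hq' := hQsub hq
      have hr' := hQsub (Set.mem_neg.mp hr)
      simp only [Set.mem_setOf_eq, Pi.neg_apply] at hq' hr'
      simp only [Pi.add_apply]
      linarith
    by_cases hA : ∀ u ∈ T, ∀ w ∈ T, u 1 = w 1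
    · -- all second coordinates equal: P in hyperplane y = 0, but (k,1) ∈ P
      have h := hplane 0 1 (fun u hu w hw => by simp [hA u hu w hw]) _ hv2
      simp at h
    · push_neg at hA
      obtain ⟨s, hs, t, ht, hst⟩ := hA
      obtain ⟨m, hm⟩ := hTint s hs 1
      obtain ⟨n, hn⟩ := hTint t ht 1
      have h1 : s 1 - t 1 ≤ 1 := hy1 s hs t ht
      have h2 : t 1 - s 1 ≤ 1 := hy1 t ht s hs
      have hmn : m = n + 1 ∨ n = m + 1 := by
        have hne : m ≠ n := by rintro rfl; exact hst (by rw [hm, hn])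
        have b1 : (m : ℝ) - n ≤ 1 := by rw [← hm, ← hn]; exact h1
        have b2 : (n : ℝ) - m ≤ 1 := by rw [← hm, ← hn]; exact h2
        have b1' : m - n ≤ 1 := by exact_mod_cast (by linarith : (m : ℝ) - n ≤ 1)
        have b2' : n - m ≤ 1 := by exact_mod_cast (by linarith : (n : ℝ) - m ≤ 1)
        omega
      -- get p, q ∈ T with p 1 = q 1 + 1
      obtain ⟨p, hp, q, hq, hpq1⟩ :
          ∃ p ∈ T, ∃ q ∈ T, p 1 = q 1 + 1 := by
        rcases hmn with h | h
        · exact ⟨s, hs, t, ht, by rw [hm, hn, h]; push_cast; ring⟩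
        · exact ⟨t, ht, s, hs, by rw [hm, hn, h]; push_cast; ring⟩
      have hpq0 : p 0 = q 0 + k := hkey p hp q hq hpq1
      obtain ⟨nq, hnq⟩ := hTint q hq 1
      -- every u ∈ T has u 0 - k * u 1 = q 0 - k * q 1
      have hconst : ∀ u ∈ T, u 0 - (k : ℝ) * u 1 = q 0 - (k : ℝ) * q 1 := by
        intro u hu
        obtain ⟨mu, hmu⟩ := hTint u hu 1
        have b1 : u 1 - q 1 ≤ 1 := hy1 u hu q hq
        have b2 : q 1 - u 1 ≤ 1 := hy1 q hq u hu
        have b3 : p 1 - u 1 ≤ 1 := hy1 p hp u hu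
        have hcase : mu = nq ∨ mu = nq + 1 := by
          have c1 : (mu : ℝ) - nq ≤ 1 := by rw [← hmu, ← hnq]; exact b1
          have c2 : (nq : ℝ) - mu ≤ 1 := by rw [← hmu, ← hnq]; exact b2
          have c3 : (nq : ℝ) + 1 - mu ≤ 1 := by
            rw [← hmu, ← hnq]; rw [hnq] at hpq1; linarith [hpq1 ▸ b3]
          have c1' : mu - nq ≤ 1 := by exact_mod_cast (by linarith : (mu : ℝ) - nq ≤ 1)
          have c3' : nq + 1 - mu ≤ 1 := by
            exact_mod_cast (by linarith : ((nq : ℝ) + 1) - mu ≤ 1)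
          omega
        rcases hcase with h | h
        · -- u 1 = q 1, so p 1 = u 1 + 1, hence p 0 = u 0 + k
          have hu1 : u 1 = q 1 := by rw [hmu, hnq, h]
          have : p 0 = u 0 + k := hkey p hp u hu (by rw [hu1]; exact hpq1)
          rw [hu1]; linarith
        · -- u 1 = q 1 + 1, hence u 0 = q 0 + k
          have hu1 : u 1 = q 1 + 1 := by rw [hmu, hnq, h]; push_cast; ring
          have : u 0 = q 0 + k := hkey u hu q hq hu1
          rw [hu1, this]; ring
      have h := hplane 1 (-(k : ℝ))
        (fun u hu w hw => by
          have := hconst u hu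
          have := hconst w hw
          ring_nf
          ring_nf at this ⊢
          linarith [hconst u hu, hconst w hw]) _ hv1
      simp only [Matrix.cons_val_zero, Matrix.cons_val_one, Matrix.head_cons] at h
      have : (k : ℝ) = 0 := by linarith
      linarith
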